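/- Let A be a normal ring (reduced and integrally closed in its total ring of fractions) and f a non-zerodivisor of A. Then the principal ideal fA is integrally closed. -/
import Mathlib


/-- `f` is integral over the ideal `I`: there is an equation
`f^k + a₁ f^(k-1) + ⋯ + a_k = 0` with `aᵢ ∈ Iⁱ` (and `k ≥ 1`). -/
def IsIntegralOverIdeal {A : Type*} [CommRing A] (I : Ideal A) (f : A) : Prop :=
  ∃ (k : ℕ) (a : ℕ → A), 0 < k ∧ (∀ i ∈ Finset.Icc 1 k, a i ∈ I ^ i) ∧
    f ^ k + ∑ i ∈ Finset.Icc 1 k, a i * f ^ (k - i) = 0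

/-- In a normal ring (reduced and integrally closed in its total ring
of fractions), every principal ideal generated by a non-zerodivisor is integrally
closed. -/
theorem span_singleton_integrallyClosed_of_normal {A : Type*} [CommRing A]
    [IsReduced A] [IsIntegrallyClosed A] (f : A) (hf : f ∈ nonZeroDivisors A)
    (g : A) (hg : IsIntegralOverIdeal (Ideal.span {f}) g) :
    g ∈ Ideal.span {f} := by
  obtain ⟨k, a, hk, ha, heq⟩ := hg
  -- extract b i with a i = b i * f ^ i
  have hb : ∀ i, ∃ c, i ∈ Finset.Icc 1 k → a i = c * f ^ i := by
    intro i
    by_cases hi : i ∈ Finset.Icc 1 k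
    · have := ha i hi
      rw [Ideal.span_singleton_pow, Ideal.mem_span_singleton] at this
      obtain ⟨c, hc⟩ := this
      exact ⟨c, fun _ => by rw [hc, mul_comm]⟩
    · exact ⟨0, fun h => absurd h hi⟩
  choose b hbspec using hb
  set K := FractionRing A
  let φ := algebraMap A K
  have hinj : Function.Injective φ := IsFractionRing.injective A K
  have hu : IsUnit (φ f) := IsLocalization.map_units K ⟨f, hf⟩
  obtain ⟨u, hu⟩ := hu
  set x : K := φ g * ↑u⁻¹ with hx
  -- key: x is integral over A
  have hxint : IsIntegral A x := by
    refine ⟨Polynomial.X ^ k + ∑ i ∈ Finset.Icc 1 k, Polynomial.C (b i) * Polynomial.X ^ (k - i),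
      ?_, ?_⟩
    · apply Polynomial.monic_X_pow_add
      apply lt_of_le_of_lt (Polynomial.degree_sum_le _ _)
      apply Finset.sup_lt_iff (by exact_mod_cast WithBot.bot_lt_coe k) |>.2
      intro i hi
      apply lt_of_le_of_lt (Polynomial.degree_C_mul_X_pow_le _ _)
      exact_mod_cast Nat.sub_lt_of_pos_le (Finset.mem_Icc.mp hi).1 (Finset.mem_Icc.mp hi).2
    · have hmul : Polynomial.aeval x
          (Polynomial.X ^ k + ∑ i ∈ Finset.Icc 1 k, Polynomial.C (b i) * Polynomial.X ^ (k - i))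
          * (↑u : K) ^ k = 0 := by
        have key : ∀ i ∈ Finset.Icc 1 k, x ^ (k - i) * (↑u : K) ^ k
            = φ (g ^ (k - i) * f ^ i) := by
          intro i hi
          obtain ⟨hi1, hi2⟩ := Finset.mem_Icc.mp hi
          have : (↑u : K) ^ k = ↑u ^ (k - i) * ↑u ^ i := by
            rw [← pow_add, Nat.sub_add_cancel hi2]
          rw [hx, this, mul_pow]
          have h3 : ((↑u⁻¹ : Kˣ) : K) ^ (k - i) * ((↑u : Kˣ) : K) ^ (k - i) = 1 := by
            rw [← mul_pow, Units.inv_mul, one_pow]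
          calc φ g ^ (k - i) * ((↑u⁻¹ : Kˣ) : K) ^ (k - i) * ((↑u : K) ^ (k - i) * ↑u ^ i)
              = φ g ^ (k - i) * ↑u ^ i * (((↑u⁻¹ : Kˣ) : K) ^ (k - i) * (↑u : K) ^ (k - i)) := by
                ring
            _ = φ (g ^ (k - i) * f ^ i) := by
                rw [h3, mul_one, hu, map_mul, map_pow, map_pow]
        rw [map_add, map_sum, Polynomial.aeval_X_pow, add_mul, Finset.sum_mul]
        have h1 : x ^ k * (↑u : K) ^ k = φ (g ^ k) := by
          rw [hx, mul_pow, mul_assoc, ← mul_pow, Units.inv_mul, one_pow, mul_one, map_pow]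
        rw [h1]
        have h2 : ∀ i ∈ Finset.Icc 1 k,
            Polynomial.aeval x (Polynomial.C (b i) * Polynomial.X ^ (k - i)) * (↑u : K) ^ k
            = φ (a i * g ^ (k - i)) := by
          intro i hi
          rw [map_mul, Polynomial.aeval_C, Polynomial.aeval_X_pow, mul_assoc, key i hi,
            hbspec i hi, map_mul, map_mul, map_mul, map_pow]
          ring
        rw [Finset.sum_congr rfl h2, ← map_sum, ← map_add, heq, map_zero]
      have := (u ^ k).isUnit
      exact (IsUnit.mul_left_eq_zero (by simpa using (u ^ k).isUnit)).mp hmul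
  obtain ⟨y, hy⟩ := IsIntegrallyClosed.isIntegral_iff.mp hxint
  rw [Ideal.mem_span_singleton]
  refine ⟨y, hinj ?_⟩
  rw [map_mul, hy, hx, ← hu, mul_comm (φ g), ← mul_assoc, Units.mul_inv, one_mul]
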